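/- Let k be a positive integer and let G = (V, E) be a (k,0)-sparse multigraph. If V₁ and V₂ are blocks of G, then V₁ ∪ V₂ is a block of G. Consequently, G has at most one component. -/
import Mathlib


/-- The number of edges of the multiset `E` (counted with multiplicity)
whose endpoints both lie in the vertex subset `S`. -/
def spanCount {V : Type*} [DecidableEq V] (E : Multiset (Sym2 V)) (S : Finset V) : ℕ :=
  (E.filter (fun e => e ∈ S.sym2)).card

/-- A multigraph on the finite vertex type `V` with edge multiset `E` is
`(k,ℓ)`-sparse if every subset `S` of vertices spans at most `max 0 (k|S| - ℓ)` edges. -/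
def Sparse {V : Type*} [Fintype V] [DecidableEq V] (k l : ℤ) (E : Multiset (Sym2 V)) : Prop :=
  ∀ S : Finset V, (spanCount E S : ℤ) ≤ max 0 (k * S.card - l)

/-- A multigraph is `(k,ℓ)`-tight if it is `(k,ℓ)`-sparse and has exactly `k|V| - ℓ` edges. -/
def Tight {V : Type*} [Fintype V] [DecidableEq V] (k l : ℤ) (E : Multiset (Sym2 V)) : Prop :=
  Sparse k l E ∧ (Multiset.card E : ℤ) = k * (Fintype.card V) - l

/-- A block of a `(k,ℓ)`-sparse multigraph is a vertex subset spanning exactly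
`k|S| - ℓ` edges. -/
def IsBlock {V : Type*} [DecidableEq V] (k l : ℤ) (E : Multiset (Sym2 V))
    (S : Finset V) : Prop :=
  (spanCount E S : ℤ) = k * S.card - l

/-- A component is a block that is maximal under inclusion of vertex sets. -/
def IsComponent {V : Type*} [DecidableEq V] (k l : ℤ) (E : Multiset (Sym2 V))
    (S : Finset V) : Prop :=
  IsBlock k l E S ∧ ∀ T : Finset V, IsBlock k l E T → S ⊆ T → S = T

/-- Supermodularity of the span count. -/
lemma spanCount_supermod {V : Type*} [DecidableEq V] (E : Multiset (Sym2 V)) (A B : Finset V) :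
    spanCount E A + spanCount E B ≤ spanCount E (A ∪ B) + spanCount E (A ∩ B) := by
  unfold spanCount
  rw [← Multiset.card_add, ← Multiset.card_add, Multiset.filter_add_filter]
  rw [Multiset.card_add, Multiset.card_add]
  have h1 : (E.filter (fun e => e ∈ A.sym2 ∨ e ∈ B.sym2)).card ≤
      (E.filter (fun e => e ∈ (A ∪ B).sym2)).card := by
    apply Multiset.card_le_card
    apply Multiset.monotone_filter_right
    intro e he
    simp only [Finset.mem_sym2_iff, Finset.mem_union] at *
    rcases he with h | h
    · exact fun a ha => Or.inl (h a ha)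
    · exact fun a ha => Or.inr (h a ha)
  have h2 : (E.filter (fun e => e ∈ A.sym2 ∧ e ∈ B.sym2)) =
      (E.filter (fun e => e ∈ (A ∩ B).sym2)) := by
    apply Multiset.filter_congr
    intro e _
    simp [Finset.mem_sym2_iff, Finset.mem_inter, forall_and]
  rw [h2] at *
  omega

/-- In a `(k,0)`-sparse multigraph with `k ≥ 1`, the union of two blocks is a block;
consequently there is at most one component. -/
theorem stmt11 (k : ℤ) (hk : 1 ≤ k)
    {V : Type*} [Fintype V] [DecidableEq V]
    (E : Multiset (Sym2 V)) (hS : Sparse k 0 E) :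
    (∀ V₁ V₂ : Finset V, IsBlock k 0 E V₁ → IsBlock k 0 E V₂ →
      IsBlock k 0 E (V₁ ∪ V₂)) ∧
    (∀ C₁ C₂ : Finset V, IsComponent k 0 E C₁ → IsComponent k 0 E C₂ → C₁ = C₂) := by
  have hmax : ∀ S : Finset V, max 0 (k * (S.card : ℤ) - 0) = k * S.card := by
    intro S
    rw [sub_zero]
    exact max_eq_right (by positivity)
  have hblock : ∀ V₁ V₂ : Finset V, IsBlock k 0 E V₁ → IsBlock k 0 E V₂ →
      IsBlock k 0 E (V₁ ∪ V₂) := by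
    intro V₁ V₂ h1 h2
    have hsup := spanCount_supermod E V₁ V₂
    have hcard : V₁.card + V₂.card = (V₁ ∪ V₂).card + (V₁ ∩ V₂).card :=
      (Finset.card_union_add_card_inter V₁ V₂).symm
    have hu := hS (V₁ ∪ V₂)
    have hi := hS (V₁ ∩ V₂)
    rw [hmax] at hu hi
    unfold IsBlock at *
    rw [sub_zero] at *
    have hsup' : (spanCount E V₁ : ℤ) + spanCount E V₂ ≤
        (spanCount E (V₁ ∪ V₂) : ℤ) + spanCount E (V₁ ∩ V₂) := by exact_mod_cast hsup
    have hcard' : (V₁.card : ℤ) + V₂.card = ((V₁ ∪ V₂).card : ℤ) + (V₁ ∩ V₂).card := by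
      exact_mod_cast hcard
    nlinarith [hu, hi, hsup', h1, h2]
  refine ⟨hblock, ?_⟩
  intro C₁ C₂ hc1 hc2
  have hb : IsBlock k 0 E (C₁ ∪ C₂) := hblock C₁ C₂ hc1.1 hc2.1
  have e1 : C₁ = C₁ ∪ C₂ := hc1.2 _ hb Finset.subset_union_left
  have e2 : C₂ = C₁ ∪ C₂ := hc2.2 _ hb Finset.subset_union_right
  exact e1.trans e2.symm
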